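/- arXiv:0708.1228 — 2 statements merged into one kernel-verified Lean document; each statement's English description precedes it below -/
import Mathlib

section
/- Let f ∈ ℂ⟦u,v⟧ be a nonzero Newton-non-degenerate formal power series with f(0)=0. Then the lowest-degree homogeneous form of f can be written as c·u^a·v^b·g(u,v), where c ∈ ℂ∖{0}, a,b ≥ 0, and g is a squarefree homogeneous polynomial divisible by neither u nor v. In particular, at most two distinct linear factors (necessarily among u and v) occur in the lowest-degree homogeneous form of f with multiplicity greater than 1, i.e. the tangent cone of the germ {f=0} has at most two tangent lines of multiplicity greater than 1. -/
open MvPolynomial Filter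

noncomputable section

/-- Polynomials in the two variables `u = X 0`, `v = X 1` over ℂ. -/
abbrev Poly2 : Type := MvPolynomial (Fin 2) ℂ

abbrev PS2 : Type := MvPowerSeries (Fin 2) ℂ

/-- The order of a formal power series: the least total degree of a monomial
with nonzero coefficient. -/
def psOrder (h : PS2) : ℕ :=
  sInf {n | ∃ m : Fin 2 →₀ ℕ, m 0 + m 1 = n ∧ MvPowerSeries.coeff m h ≠ 0}

/-- The lowest-degree homogeneous form of a formal power series, as a polynomial. -/
def psLowestForm (h : PS2) : Poly2 :=
  ∑ i ∈ Finset.range (psOrder h + 1),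
    monomial (Finsupp.single 0 i + Finsupp.single 1 (psOrder h - i))
      (MvPowerSeries.coeff (Finsupp.single 0 i + Finsupp.single 1 (psOrder h - i)) h)

/-- The `w`-weighted order of a formal power series, for weights `w : Fin 2 → ℕ`. -/
def wOrder (w : Fin 2 → ℕ) (f : PS2) : ℕ :=
  sInf {n | ∃ m : Fin 2 →₀ ℕ, m 0 * w 0 + m 1 * w 1 = n ∧ MvPowerSeries.coeff m f ≠ 0}

/-- The `w`-initial form of a formal power series: the sum of all its terms of minimal
`w`-weighted degree, as a polynomial. -/
def wInitialForm (w : Fin 2 → ℕ) (f : PS2) : Poly2 :=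
  ∑ p ∈ (Finset.range (wOrder w f + 1) ×ˢ Finset.range (wOrder w f + 1)).filter
      (fun p : ℕ × ℕ => p.1 * w 0 + p.2 * w 1 = wOrder w f),
    monomial (Finsupp.single 0 p.1 + Finsupp.single 1 p.2)
      (MvPowerSeries.coeff (Finsupp.single 0 p.1 + Finsupp.single 1 p.2) f)

/-- A power series `f` is Newton-non-degenerate if for every pair of positive integer
weights `w` the `w`-initial form of `f` has no critical points in the torus `(ℂ∖{0})²`. -/
def NewtonNonDegenerate (f : PS2) : Prop :=
  ∀ w : Fin 2 → ℕ, (∀ i, 0 < w i) →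
    ¬ ∃ a : Fin 2 → ℂ, a 0 ≠ 0 ∧ a 1 ≠ 0 ∧
      eval a (pderiv 0 (wInitialForm w f)) = 0 ∧
      eval a (pderiv 1 (wInitialForm w f)) = 0

/-!
With weights `(1, 1)`, non-degeneracy says that the lowest form `P` has no critical point in the
torus. Dehomogenize: `p(t) = P(t, 1)` factors as `t ^ a * q(t)` with `q(0) ≠ 0`. If `(t - l)²`
divided `q` with `l ≠ 0`, then the square of the linear form `u - l v` would divide `P`, making
`(l, 1)` a critical point of `P`. Hence `q` is squarefree, and `P = u ^ a * v ^ b * g` where `g`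
is the homogenization of `q`. Finally `g` is squarefree: dehomogenization preserves the degree of
every factor of `g`, so a square factor of `g` would give a nonconstant square factor of `q`.
-/

namespace MvPolynomial

variable {R σ : Type*} [CommSemiring R]

theorem eval_pderiv_eq_zero_of_sq_dvd {L P : MvPolynomial σ R} {x : σ → R}
    (hL : eval x L = 0) (h : L ^ 2 ∣ P) (i : σ) : eval x (pderiv i P) = 0 := by
  obtain ⟨Q, rfl⟩ := h
  simp [hL]

theorem not_X_dvd_of_coeff_ne_zero {P : MvPolynomial σ R} {m : σ →₀ ℕ} {i : σ}
    (hm : m i = 0) (h : coeff m P ≠ 0) : ¬ X i ∣ P := by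
  classical
  rintro ⟨Q, rfl⟩
  simp [coeff_X_mul', hm] at h

end MvPolynomial

namespace Polynomial

variable {R : Type*} [CommSemiring R]

theorem natDegree_aeval_X_one_le_totalDegree (P : MvPolynomial (Fin 2) R) :
    (MvPolynomial.aeval ![(X : R[X]), 1] P).natDegree ≤ P.totalDegree := by
  conv_lhs => rw [P.as_sum, map_sum]
  refine natDegree_sum_le_of_forall_le _ _ fun m hm => ?_
  rw [MvPolynomial.aeval_monomial, Finsupp.prod_fintype _ _ (by simp), Fin.prod_univ_two]
  simp only [Matrix.cons_val_zero, Matrix.cons_val_one, one_pow, mul_one]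
  refine (natDegree_C_mul_le _ _).trans ((natDegree_X_pow_le _).trans ?_)
  refine le_trans ?_ (le_totalDegree hm)
  simp [Finsupp.sum_fintype]

theorem homogenize_dvd_homogenize {p : R[X]} {m n : ℕ} (hp : p.natDegree ≤ m) (hmn : m ≤ n) :
    p.homogenize m ∣ p.homogenize n := by
  refine ⟨MvPolynomial.X 1 ^ (n - m), ?_⟩
  rw [← homogenize_one, ← homogenize_mul _ _ hp (by simp), mul_one, Nat.add_sub_cancel' hmn]

theorem homogenize_X_pow_mul {q : R[X]} {a e d : ℕ} (hq : q.natDegree ≤ e) (hd : a + e ≤ d) :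
    (X ^ a * q).homogenize d = .X 0 ^ a * .X 1 ^ (d - (a + e)) * q.homogenize e := by
  have hXa : (X ^ a : R[X]).natDegree ≤ a := natDegree_X_pow_le a
  calc (X ^ a * q).homogenize d = (X ^ a * q * 1).homogenize (a + e + (d - (a + e))) := by
        rw [mul_one, Nat.add_sub_cancel' hd]
    _ = (X ^ a).homogenize a * q.homogenize e * (1 : R[X]).homogenize (d - (a + e)) := by
        rw [homogenize_mul _ _ (natDegree_mul_le.trans (add_le_add hXa hq)) (by simp),
          homogenize_mul _ _ hXa hq]
    _ = .X 0 ^ a * .X 1 ^ (d - (a + e)) * q.homogenize e := by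
        rw [homogenize_X_pow le_rfl, homogenize_one, Nat.sub_self, pow_zero, mul_one]
        ring

theorem not_X_zero_dvd_homogenize {q : R[X]} {n : ℕ} (h : q.coeff 0 ≠ 0) :
    ¬ MvPolynomial.X 0 ∣ q.homogenize n := by
  refine MvPolynomial.not_X_dvd_of_coeff_ne_zero (m := Finsupp.single 1 n) (by simp) ?_
  rw [coeff_homogenize]
  simpa using h

theorem not_X_one_dvd_homogenize_natDegree {q : R[X]} (hq : q ≠ 0) :
    ¬ MvPolynomial.X 1 ∣ q.homogenize q.natDegree := by
  refine MvPolynomial.not_X_dvd_of_coeff_ne_zero (m := Finsupp.single 0 q.natDegree) (by simp) ?_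
  rw [coeff_homogenize]
  simpa using hq

variable {K : Type*} [Field K]

theorem squarefree_homogenize_natDegree {q : K[X]} (hq : Squarefree q) :
    Squarefree (q.homogenize q.natDegree) := by
  rintro s ⟨t, ht⟩
  have hq0 : q ≠ 0 := hq.ne_zero
  have hg0 : q.homogenize q.natDegree ≠ 0 := by
    rwa [Ne, homogenize_eq_zero_iff le_rfl]
  have hsst : s * s * t ≠ 0 := ht ▸ hg0
  have hs0 : s ≠ 0 := left_ne_zero_of_mul (left_ne_zero_of_mul hsst)
  have ht0 : t ≠ 0 := right_ne_zero_of_mul hsst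
  set φ := MvPolynomial.aeval (R := K) ![(X : K[X]), 1]
  have hφ : q = φ s * φ s * φ t := by
    rw [← aeval_homogenize_X_one q le_rfl, ht, map_mul, map_mul]
  have hφst : φ s * φ s * φ t ≠ 0 := hφ ▸ hq0
  have hφs0 : φ s ≠ 0 := left_ne_zero_of_mul (left_ne_zero_of_mul hφst)
  have hφt0 : φ t ≠ 0 := right_ne_zero_of_mul hφst
  have hdeg : q.natDegree = 2 * s.totalDegree + t.totalDegree := by
    rw [← (isHomogeneous_homogenize q).totalDegree hg0, ht,
      totalDegree_mul_of_isDomain (mul_ne_zero hs0 hs0) ht0, totalDegree_mul_of_isDomain hs0 hs0]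
    ring
  have hdegφ : q.natDegree = 2 * (φ s).natDegree + (φ t).natDegree := by
    rw [hφ, natDegree_mul (mul_ne_zero hφs0 hφs0) hφt0, natDegree_mul hφs0 hφs0]
    ring
  have hunit : IsUnit (φ s) := hq _ ⟨φ t, hφ⟩
  have hsC : s = MvPolynomial.C (MvPolynomial.coeff 0 s) := by
    refine totalDegree_eq_zero_iff_eq_C.mp ?_
    have hs_le : (φ s).natDegree ≤ s.totalDegree := natDegree_aeval_X_one_le_totalDegree s
    have ht_le : (φ t).natDegree ≤ t.totalDegree := natDegree_aeval_X_one_le_totalDegree t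
    have := natDegree_eq_zero_of_isUnit hunit
    omega
  rw [hsC] at hs0 ⊢
  exact (isUnit_iff_ne_zero.mpr fun h => hs0 (by rw [h, map_zero])).map MvPolynomial.C

theorem squarefree_of_forall_sq_X_sub_C_not_dvd [IsAlgClosed K] {q : K[X]}
    (h : ∀ l, ¬ (X - C l) ^ 2 ∣ q) : Squarefree q := by
  intro s hs
  by_contra hu
  obtain ⟨l, hl⟩ := IsAlgClosed.exists_root s (mt isUnit_iff_degree_eq_zero.mpr hu)
  exact h l ((pow_dvd_pow_of_dvd (dvd_iff_isRoot.mpr hl) 2).trans (sq s ▸ hs))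

end Polynomial

namespace MvPolynomial

variable {R : Type*} [CommSemiring R]

open Polynomial in
theorem IsHomogeneous.homogenize_aeval_X_one {P : MvPolynomial (Fin 2) R} {d : ℕ}
    (hP : P.IsHomogeneous d) :
    (MvPolynomial.aeval ![(Polynomial.X : R[X]), 1] P).homogenize d = P :=
  homogenize_eq_of_isHomogeneous hP rfl

variable {K : Type*} [Field K]

open Polynomial in
theorem IsHomogeneous.eval_pderiv_eq_zero_of_sq_X_sub_C_dvd {P : MvPolynomial (Fin 2) K}
    {d : ℕ} (hP : P.IsHomogeneous d) {l : K}
    (h : (Polynomial.X - Polynomial.C l) ^ 2 ∣ MvPolynomial.aeval ![(Polynomial.X : K[X]), 1] P)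
    (i : Fin 2) :
    eval ![l, 1] (pderiv i P) = 0 := by
  set L := (Polynomial.X - Polynomial.C l).homogenize 1
  have hL : eval ![l, 1] L = 0 := by
    rw [eval_homogenize (natDegree_X_sub_C_le l) _ (by simp)]
    simp
  have hL2 : L ^ 2 = ((Polynomial.X - Polynomial.C l) ^ 2).homogenize 2 := by
    rw [sq, sq, ← homogenize_mul _ _ (natDegree_X_sub_C_le l) (natDegree_X_sub_C_le l)]
  have hdeg : ((Polynomial.X - Polynomial.C l) ^ 2).natDegree = 2 := by simp
  refine eval_pderiv_eq_zero_of_sq_dvd hL ?_ i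
  have hdvd := homogenize_dvd h
  rw [hdeg] at hdvd
  rw [hL2, ← hP.homogenize_aeval_X_one]
  exact hdvd.trans (homogenize_dvd_homogenize le_rfl
    ((natDegree_aeval_X_one_le_totalDegree P).trans hP.totalDegree_le))

open Polynomial in
theorem IsHomogeneous.exists_eq_X_pow_mul_X_pow_mul_squarefree [IsAlgClosed K]
    {P : MvPolynomial (Fin 2) K} {d : ℕ} (hP : P.IsHomogeneous d) (hP0 : P ≠ 0)
    (hcrit : ¬ ∃ x : Fin 2 → K, x 0 ≠ 0 ∧ x 1 ≠ 0 ∧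
      eval x (pderiv 0 P) = 0 ∧ eval x (pderiv 1 P) = 0) :
    ∃ (a b : ℕ) (g : MvPolynomial (Fin 2) K), P = X 0 ^ a * X 1 ^ b * g ∧
      g.IsHomogeneous (d - a - b) ∧ Squarefree g ∧ ¬ X 0 ∣ g ∧ ¬ X 1 ∣ g := by
  set p := MvPolynomial.aeval ![(Polynomial.X : K[X]), 1] P
  have hpd : p.natDegree ≤ d :=
    (natDegree_aeval_X_one_le_totalDegree P).trans hP.totalDegree_le
  have hPp : p.homogenize d = P := hP.homogenize_aeval_X_one
  have hp0 : p ≠ 0 := fun hp => hP0 (by rw [← hPp, hp, homogenize_zero])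
  obtain ⟨q, hpq, hXq⟩ := p.exists_eq_pow_rootMultiplicity_mul_and_not_dvd hp0 0
  simp only [map_zero, sub_zero] at hpq hXq
  set a := p.rootMultiplicity 0
  set e := q.natDegree
  have hq0 : q ≠ 0 := right_ne_zero_of_mul (hpq ▸ hp0)
  have hae : a + e ≤ d := by
    rwa [hpq, natDegree_mul (pow_ne_zero _ Polynomial.X_ne_zero) hq0, natDegree_X_pow] at hpd
  have hq : Squarefree q := by
    refine squarefree_of_forall_sq_X_sub_C_not_dvd fun l hl => ?_
    by_cases hl0 : l = 0
    · subst hl0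
      exact hXq (by simpa using (dvd_pow_self _ two_ne_zero).trans hl)
    · have hlp : (Polynomial.X - Polynomial.C l) ^ 2 ∣ p := by
        rw [hpq]
        exact hl.trans (dvd_mul_left _ _)
      exact hcrit ⟨![l, 1], hl0, one_ne_zero, hP.eval_pderiv_eq_zero_of_sq_X_sub_C_dvd hlp 0,
        hP.eval_pderiv_eq_zero_of_sq_X_sub_C_dvd hlp 1⟩
  refine ⟨a, d - (a + e), q.homogenize e, ?_, ?_, squarefree_homogenize_natDegree hq,
    not_X_zero_dvd_homogenize (mt X_dvd_iff.mpr hXq), not_X_one_dvd_homogenize_natDegree hq0⟩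
  · rw [← hPp, hpq, homogenize_X_pow_mul le_rfl hae]
  · rw [show d - a - (d - (a + e)) = e by omega]
    exact isHomogeneous_homogenize q

end MvPolynomial

theorem exists_coeff_ne_zero_at_psOrder {f : PS2} (hf : f ≠ 0) :
    ∃ m : Fin 2 →₀ ℕ, m 0 + m 1 = psOrder f ∧ MvPowerSeries.coeff m f ≠ 0 := by
  obtain ⟨m, hm⟩ : ∃ m, MvPowerSeries.coeff m f ≠ 0 := by
    by_contra! h
    exact hf (MvPowerSeries.ext h)
  exact Nat.sInf_mem
    (s := {n | ∃ m : Fin 2 →₀ ℕ, m 0 + m 1 = n ∧ MvPowerSeries.coeff m f ≠ 0}) ⟨_, m, rfl, hm⟩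

theorem coeff_psLowestForm (f : PS2) {m : Fin 2 →₀ ℕ} (hm : m 0 + m 1 = psOrder f) :
    coeff m (psLowestForm f) = MvPowerSeries.coeff m f := by
  have key : ∀ i, Finsupp.single 0 i + Finsupp.single 1 (psOrder f - i) = m ↔ m 0 = i := by
    refine fun i => ⟨fun h => by simp [← h], fun h => ?_⟩
    ext j
    fin_cases j <;> simp [← h]
    omega
  simp only [psLowestForm, coeff_sum, coeff_monomial, key]
  rw [Finset.sum_ite_eq, if_pos (Finset.mem_range.mpr (by omega)), (key _).mpr rfl]

theorem isHomogeneous_psLowestForm (f : PS2) : (psLowestForm f).IsHomogeneous (psOrder f) := by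
  refine IsHomogeneous.sum _ _ _ fun i hi => isHomogeneous_monomial _ ?_
  rw [map_add, Finsupp.degree_single, Finsupp.degree_single]
  have := Finset.mem_range.mp hi
  omega

theorem psLowestForm_ne_zero {f : PS2} (hf : f ≠ 0) : psLowestForm f ≠ 0 := by
  obtain ⟨m, hm, hfm⟩ := exists_coeff_ne_zero_at_psOrder hf
  exact ne_zero_iff.mpr ⟨m, by rwa [coeff_psLowestForm f hm]⟩

theorem wInitialForm_one_eq_psLowestForm (f : PS2) :
    wInitialForm (fun _ => 1) f = psLowestForm f := by
  have hord : wOrder (fun _ => 1) f = psOrder f := by simp [wOrder, psOrder]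
  rw [wInitialForm, psLowestForm, hord]
  refine Finset.sum_nbij' Prod.fst (fun i => (i, psOrder f - i)) ?_ ?_ ?_ ?_ ?_ <;>
    simp only [Finset.mem_filter, Finset.mem_product, Finset.mem_range, mul_one, Prod.forall,
      Prod.mk.injEq, true_and, and_imp]
  · intros; omega
  · intros; omega
  · intros; omega
  · simp
  · intro a b _ _ h
    rw [← h, Nat.add_sub_cancel_left]

theorem newton_nondegenerate_tangent_cone_general
    (f : PS2) (hf : f ≠ 0)
    (hN : NewtonNonDegenerate f) :
    ∃ (c : ℂ) (a b : ℕ) (g : Poly2), c ≠ 0 ∧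
      psLowestForm f = c • (X 0 ^ a * X 1 ^ b * g) ∧
      g.IsHomogeneous (psOrder f - a - b) ∧
      Squarefree g ∧
      ¬ (X 0 : Poly2) ∣ g ∧ ¬ (X 1 : Poly2) ∣ g := by
  obtain ⟨a, b, g, hP, hg, hg_sq, hu, hv⟩ :=
    (isHomogeneous_psLowestForm f).exists_eq_X_pow_mul_X_pow_mul_squarefree
      (psLowestForm_ne_zero hf)
      (wInitialForm_one_eq_psLowestForm f ▸ hN (fun _ => 1) fun _ => one_pos)
  exact ⟨1, a, b, g, one_ne_zero, by rw [one_smul, hP], hg, hg_sq, hu, hv⟩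

/-- The lowest-degree homogeneous form of a nonzero Newton-non-degenerate
power series `f` with `f(0) = 0` is `c · u^a · v^b · g` with `c ≠ 0` and `g` a squarefree
homogeneous polynomial divisible by neither `u` nor `v`; in particular at most the two tangent
lines `u = 0`, `v = 0` occur in the tangent cone of `{f = 0}` with multiplicity `> 1`. -/
theorem newton_nondegenerate_tangent_cone
    (f : PS2) (hf : f ≠ 0)
    (h0 : MvPowerSeries.constantCoeff f = 0)
    (hN : NewtonNonDegenerate f) :
    ∃ (c : ℂ) (a b : ℕ) (g : Poly2), c ≠ 0 ∧
      psLowestForm f = c • (X 0 ^ a * X 1 ^ b * g) ∧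
      g.IsHomogeneous (psOrder f - a - b) ∧
      Squarefree g ∧
      ¬ (X 0 : Poly2) ∣ g ∧ ¬ (X 1 : Poly2) ∣ g :=
  newton_nondegenerate_tangent_cone_general f hf hN

end
end

section
/- For all integers k, l ≥ 1 and every sufficiently large integer d there exists a result F of a collision in degree d of the germ at the origin of the A_k-singularity {u²+v^{k+1}=0} and the germ at the origin of the A_l-singularity {u²+v^{l+1}=0}, such that the germ of {F=0} at the origin is topologically equivalent to the germ at the origin of the A_{k+l+1}-singularity {u²+v^{k+l+2}=0}. -/
/-! The curves `u² + v^(k+1) (v - t)^(l+1) = 0` have an `A_k` point at the origin and an `A_l`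
point at `(0, t)` for `t ≠ 0`, and degenerate to `u² + v^(k+l+2) = 0` at `t = 0`. Near `(0, t₀)`,
a curve `u² + (v - t₀)^m g(v) = 0` with `g(t₀) ≠ 0` is carried onto `u² + v^m = 0` by
`(u, v) ↦ (u / √(g v), v - t₀)`, for a continuous branch of `√g` near `t₀`. -/

open MvPolynomial Filter

noncomputable section

/-- Points of the complex plane ℂ². -/
abbrev Pt : Type := Fin 2 → ℂ

/-- The zero set of a polynomial in ℂ². -/
def zeroSet (f : Poly2) : Set Pt := {p | eval p f = 0}

/-- The germs `(V, a)` and `(W, b)` of plane curves are topologically equivalent: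
there are open neighbourhoods `U ∋ a`, `U' ∋ b` and a homeomorphism `φ : U ≃ₜ U'`
with `φ a = b` carrying `V ∩ U` onto `W ∩ U'`. -/
def GermEquiv (V : Set Pt) (a : Pt) (W : Set Pt) (b : Pt) : Prop :=
  ∃ (U U' : Set Pt), IsOpen U ∧ IsOpen U' ∧ b ∈ U' ∧
    ∃ (φ : U ≃ₜ U') (ha : a ∈ U),
      ((φ ⟨a, ha⟩ : U') : Pt) = b ∧
      ∀ x : U, (x : Pt) ∈ V ↔ ((φ x : U') : Pt) ∈ W

/-- The polynomial `f (a + ·)`, i.e. `f` translated so that `a` becomes the origin. -/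
def shiftBy (a : Pt) (f : Poly2) : Poly2 := bind₁ (fun i => X i + C (a i)) f

/-- The multiplicity `mult_a f`: the least total degree of a monomial occurring
in the Taylor expansion of `f` at `a`. -/
def multAt (a : Pt) (f : Poly2) : ℕ :=
  sInf {n | homogeneousComponent n (shiftBy a f) ≠ 0}

/-- The lowest form of `f` at `a`: the homogeneous part of `f (a + ·)` of degree `mult_a f`. -/
def lowestForm (a : Pt) (f : Poly2) : Poly2 :=
  homogeneousComponent (multAt a f) (shiftBy a f)

/-- `F` (of degree ≤ d) is a result of a collision in degree `d` of the germs at the origin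
of `{fx = 0}` and `{fy = 0}`: there are curves `{Fₙ = 0}` of degree ≤ d having a singular
point of the topological type of `fx` at the origin and one of the topological type of `fy`
at a point `yₙ ≠ 0`, with `yₙ → 0` and `Fₙ → F` coefficient-wise. -/
def IsCollisionResult (d : ℕ) (fx fy F : Poly2) : Prop :=
  F.totalDegree ≤ d ∧
  ∃ (Fs : ℕ → Poly2) (y : ℕ → Pt),
    (∀ n, (Fs n).totalDegree ≤ d) ∧
    (∀ n, y n ≠ 0) ∧
    Tendsto y atTop (nhds 0) ∧
    (∀ m : Fin 2 →₀ ℕ, Tendsto (fun n => coeff m (Fs n)) atTop (nhds (coeff m F))) ∧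
    (∀ n, GermEquiv (zeroSet (Fs n)) 0 (zeroSet fx) 0) ∧
    (∀ n, GermEquiv (zeroSet (Fs n)) (y n) (zeroSet fy) 0)

lemma germEquiv_refl (V : Set Pt) (a : Pt) : GermEquiv V a V a :=
  ⟨Set.univ, Set.univ, isOpen_univ, isOpen_univ, Set.mem_univ a,
    Homeomorph.refl _, Set.mem_univ a, rfl, fun _ => Iff.rfl⟩

lemma germEquiv_of_openPartialHomeomorph {V W : Set Pt} {a b : Pt}
    (e : OpenPartialHomeomorph Pt Pt) (ha : a ∈ e.source) (hab : e a = b)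
    (hVW : ∀ x ∈ e.source, x ∈ V ↔ e x ∈ W) : GermEquiv V a W b :=
  ⟨e.source, e.target, e.open_source, e.open_target, hab ▸ e.map_source ha,
    e.toHomeomorphSourceTarget, ha, hab, fun x => hVW x x.2⟩

lemma exists_continuousOn_sq_eq {X : Type*} [TopologicalSpace X] {g : X → ℂ} (hg : Continuous g)
    {x₀ : X} (hx₀ : g x₀ ≠ 0) :
    ∃ V : Set X, IsOpen V ∧ x₀ ∈ V ∧
      ∃ s : X → ℂ, ContinuousOn s V ∧ ∀ x ∈ V, s x ≠ 0 ∧ s x ^ 2 = g x := by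
  set c := g x₀
  refine ⟨(fun x => g x / c) ⁻¹' Complex.slitPlane, Complex.isOpen_slitPlane.preimage
    (hg.div_const c), by simp [c, hx₀], fun x => c ^ (2⁻¹ : ℂ) * (g x / c) ^ (2⁻¹ : ℂ),
    continuousOn_const.mul ((hg.div_const c).continuousOn.cpow_const fun _ h => h), ?_⟩
  intro x hx
  have hsq : (c ^ (2⁻¹ : ℂ) * (g x / c) ^ (2⁻¹ : ℂ)) ^ 2 = g x := by
    rw [mul_pow, ← Nat.cast_ofNat, Complex.cpow_nat_inv_pow _ two_ne_zero,
      Complex.cpow_nat_inv_pow _ two_ne_zero, mul_div_cancel₀ _ hx₀]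
  refine ⟨fun h => ?_, hsq⟩
  simp only at h
  rw [Set.mem_preimage, ← hsq, h] at hx
  simp at hx

def divShift (s : ℂ → ℂ) (t₀ : ℂ) {V : Set ℂ} (hV : IsOpen V) (hs : ContinuousOn s V)
    (hs₀ : ∀ y ∈ V, s y ≠ 0) : OpenPartialHomeomorph Pt Pt where
  toFun p := ![p 0 / s (p 1), p 1 - t₀]
  invFun q := ![q 0 * s (q 1 + t₀), q 1 + t₀]
  source := {p | p 1 ∈ V}
  target := {q | q 1 + t₀ ∈ V}
  map_source' p hp := by simpa using hp
  map_target' q hq := by simpa using hq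
  left_inv' p hp := by
    ext i; fin_cases i <;> simp [div_mul_cancel₀ _ (hs₀ _ hp)]
  right_inv' q hq := by
    ext i; fin_cases i <;> simp [mul_div_cancel_right₀ _ (hs₀ _ hq)]
  open_source := hV.preimage (continuous_apply 1)
  open_target := hV.preimage ((continuous_apply 1).add continuous_const)
  continuousOn_toFun := by
    have : ContinuousOn (fun p : Pt => s (p 1)) {p | p 1 ∈ V} :=
      hs.comp (continuous_apply 1).continuousOn fun _ hp => hp
    refine .matrixVecCons (.div (by fun_prop) this fun p hp => hs₀ _ hp) ?_
    fun_prop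
  continuousOn_invFun := by
    have : ContinuousOn (fun q : Pt => s (q 1 + t₀)) {q | q 1 + t₀ ∈ V} :=
      hs.comp (by fun_prop) fun _ hq => hq
    refine .matrixVecCons (.mul (by fun_prop) this) ?_
    fun_prop

lemma germEquiv_slice (m : ℕ) {g : ℂ → ℂ} (hg : Continuous g) {t₀ : ℂ} (hg₀ : g t₀ ≠ 0) :
    GermEquiv {p : Pt | p 0 ^ 2 + (p 1 - t₀) ^ m * g (p 1) = 0} ![0, t₀]
      (zeroSet (X 0 ^ 2 + X 1 ^ m)) 0 := by
  obtain ⟨V, hV, ht₀, s, hs, hsV⟩ := exists_continuousOn_sq_eq hg hg₀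
  refine germEquiv_of_openPartialHomeomorph
    (divShift s t₀ hV hs fun y hy => (hsV y hy).1) (by simpa [divShift] using ht₀) ?_ ?_
  · ext i; fin_cases i <;> simp [divShift]
  · intro p hp
    obtain ⟨hs₀, hsq⟩ := hsV _ hp
    have hg₀ : g (p 1) ≠ 0 := hsq ▸ pow_ne_zero 2 hs₀
    simp only [Set.mem_ofPred_eq, zeroSet, map_add, map_pow, eval_X, divShift,
      OpenPartialHomeomorph.coe_mk, Matrix.cons_val_zero, Matrix.cons_val_one]
    rw [div_pow, hsq, div_add' _ _ _ hg₀, div_eq_zero_iff, or_iff_left hg₀]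

lemma isCollisionResult_of_family {d : ℕ} {fx fy : Poly2} (G : ℂ → Poly2) (y : ℂ → Pt)
    (hG : ∀ m, Continuous fun t => coeff m (G t)) (hGd : ∀ t, (G t).totalDegree ≤ d)
    (hy : Continuous y) (hy₀ : y 0 = 0) (hy_ne : ∀ t ≠ 0, y t ≠ 0)
    (hfx : ∀ t ≠ 0, GermEquiv (zeroSet (G t)) 0 (zeroSet fx) 0)
    (hfy : ∀ t ≠ 0, GermEquiv (zeroSet (G t)) (y t) (zeroSet fy) 0) :
    IsCollisionResult d fx fy (G 0) := by
  set t : ℕ → ℂ := fun n => 1 / ((n : ℂ) + 1)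
  have ht : Tendsto t atTop (nhds 0) := tendsto_one_div_add_atTop_nhds_zero_nat
  have ht₀ : ∀ n, t n ≠ 0 := fun n => one_div_ne_zero (Nat.cast_add_one_ne_zero n)
  exact ⟨hGd 0, G ∘ t, y ∘ t, fun n => hGd _, fun n => hy_ne _ (ht₀ n),
    hy₀ ▸ (hy.tendsto 0).comp ht, fun m => ((hG m).tendsto 0).comp ht,
    fun n => hfx _ (ht₀ n), fun n => hfy _ (ht₀ n)⟩

lemma continuous_coeff_map_evalRingHom {σ R : Type*} [CommSemiring R] [TopologicalSpace R]
    [IsTopologicalSemiring R] (P : MvPolynomial σ (Polynomial R)) (m : σ →₀ ℕ) :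
    Continuous fun t => coeff m (map (Polynomial.evalRingHom t) P) := by
  simpa only [coeff_map, Polynomial.coe_evalRingHom] using (coeff m P).continuous

def collidingFamily (k l : ℕ) (t : ℂ) : Poly2 := X 0 ^ 2 + X 1 ^ (k + 1) * (X 1 - C t) ^ (l + 1)

lemma eval_collidingFamily (k l : ℕ) (t : ℂ) (p : Pt) :
    eval p (collidingFamily k l t) = p 0 ^ 2 + p 1 ^ (k + 1) * (p 1 - t) ^ (l + 1) := by
  simp [collidingFamily]

lemma collidingFamily_zero (k l : ℕ) : collidingFamily k l 0 = X 0 ^ 2 + X 1 ^ (k + l + 2) := by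
  rw [collidingFamily, map_zero, sub_zero, ← pow_add]
  ring_nf

lemma totalDegree_collidingFamily_le (k l : ℕ) (t : ℂ) :
    (collidingFamily k l t).totalDegree ≤ k + l + 2 := by
  have hlin : (X 1 - C t : Poly2).totalDegree ≤ 1 :=
    (totalDegree_sub_C_le _ _).trans (totalDegree_X 1).le
  have hpow := (totalDegree_pow (X 1 - C t : Poly2) (l + 1)).trans (Nat.mul_le_mul_left _ hlin)
  refine (totalDegree_add _ _).trans (max_le ?_ ((totalDegree_mul _ _).trans ?_))
  all_goals rw [totalDegree_X_pow]; omega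

lemma collidingFamily_eq_map (k l : ℕ) (t : ℂ) :
    collidingFamily k l t = map (Polynomial.evalRingHom t)
      (X 0 ^ 2 + X 1 ^ (k + 1) * (X 1 - C Polynomial.X) ^ (l + 1)) := by
  simp [collidingFamily]

lemma continuous_coeff_collidingFamily (k l : ℕ) (m : Fin 2 →₀ ℕ) :
    Continuous fun t => coeff m (collidingFamily k l t) := by
  simpa only [collidingFamily_eq_map] using continuous_coeff_map_evalRingHom _ m

lemma germEquiv_collidingFamily_origin (k l : ℕ) {t : ℂ} (ht : t ≠ 0) :
    GermEquiv (zeroSet (collidingFamily k l t)) 0 (zeroSet (X 0 ^ 2 + X 1 ^ (k + 1))) 0 := by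
  convert germEquiv_slice (k + 1) (g := fun y => (y - t) ^ (l + 1)) (by fun_prop)
    (t₀ := 0) (by simpa using ht) using 1
  · ext p; simp [zeroSet, eval_collidingFamily]
  · ext i; fin_cases i <;> rfl

lemma germEquiv_collidingFamily_at (k l : ℕ) {t : ℂ} (ht : t ≠ 0) :
    GermEquiv (zeroSet (collidingFamily k l t)) ![0, t]
      (zeroSet (X 0 ^ 2 + X 1 ^ (l + 1))) 0 := by
  convert germEquiv_slice (l + 1) (g := fun y => y ^ (k + 1)) (by fun_prop) (by simpa using ht)
    using 1
  ext p; simp [zeroSet, eval_collidingFamily, mul_comm]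

theorem Ak_plus_Al_collision_general (k l : ℕ) :
    ∃ D : ℕ, ∀ d : ℕ, D ≤ d → ∃ F : Poly2,
      IsCollisionResult d (X 0 ^ 2 + X 1 ^ (k+1)) (X 0 ^ 2 + X 1 ^ (l+1)) F ∧
      GermEquiv (zeroSet F) 0 (zeroSet (X 0 ^ 2 + X 1 ^ (k+l+2))) 0 := by
  refine ⟨k + l + 2, fun d hd => ⟨collidingFamily k l 0, ?_, ?_⟩⟩
  · refine isCollisionResult_of_family (collidingFamily k l) (fun t => ![0, t])
      (continuous_coeff_collidingFamily k l)
      (fun t => (totalDegree_collidingFamily_le k l t).trans hd) (by fun_prop) ?_ ?_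
      (fun _ => germEquiv_collidingFamily_origin k l) (fun _ => germEquiv_collidingFamily_at k l)
    · ext i; fin_cases i <;> rfl
    · exact fun t ht h => ht (by simpa using congrFun h 1)
  · rw [collidingFamily_zero]
    exact germEquiv_refl _ _

/-- For all `k, l ≥ 1`, for every sufficiently large degree `d` there is a
result of a collision in degree `d` of an `A_k`-singularity `u² + v^(k+1)` and an
`A_l`-singularity `u² + v^(l+1)` whose germ at the origin is topologically equivalent to the
`A_(k+l+1)`-singularity `u² + v^(k+l+2)`. -/
theorem Ak_plus_Al_collision (k l : ℕ) (hk : 1 ≤ k) (hl : 1 ≤ l) :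
    ∃ D : ℕ, ∀ d : ℕ, D ≤ d → ∃ F : Poly2,
      IsCollisionResult d (X 0 ^ 2 + X 1 ^ (k+1)) (X 0 ^ 2 + X 1 ^ (l+1)) F ∧
      GermEquiv (zeroSet F) 0 (zeroSet (X 0 ^ 2 + X 1 ^ (k+l+2))) 0 :=
  Ak_plus_Al_collision_general k l

end
end
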